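/- Consider the scalar system ė = −e/(1+e²) on ℝ and let E(e,t) denote its solution with E(e,0) = e. Then for all e in ℝ and all t ≥ 0, E(e,t)² exp(E(e,t)²) = e² exp(e²) exp(−2t); consequently E(e,t)² ≤ e² exp(e²) exp(−2t), i.e. |E(e,t)| ≤ k(|e|) exp(−t)·1 with k(s) = s exp(s²/2), so |E(e,t)| ≤ |e| exp(e²/2) exp(−t). -/

import Mathlib

open Real Set Filter
open scoped Topology

/-!
Along a solution of `ė = -e / (1 + e²)` the function `V(x) = x² exp(x²)` satisfies
`V' = 2x exp(x²) (1 + x²) · (-x / (1 + x²)) = -2 V`: the factor `1 + x²` cancels, so `V` decays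
exactly like `exp(-2t)`. The two bounds follow from `x² ≤ x² exp(x²)` and taking square roots.
-/

lemma eq_mul_exp_of_hasDerivAt_eq_const_mul {u : ℝ → ℝ} {c : ℝ}
    (hu : ∀ t, HasDerivAt u (c * u t) t) (t : ℝ) : u t = u 0 * exp (c * t) := by
  have hconst : ∀ s, HasDerivAt (fun s => u s * exp (-(c * s))) 0 s := fun s => by
    have hexp : HasDerivAt (fun s => exp (-(c * s))) (exp (-(c * s)) * -c) s :=
      (((hasDerivAt_id s).const_mul c).neg.exp).congr_deriv (by simp)
    exact ((hu s).mul hexp).congr_deriv (by ring)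
  have h := is_const_of_deriv_eq_zero (fun s => (hconst s).differentiableAt)
    (fun s => (hconst s).deriv) t 0
  simp only [mul_zero, neg_zero, exp_zero, mul_one] at h
  rw [← h, mul_assoc, ← exp_add, neg_add_cancel, exp_zero, mul_one]

lemma hasDerivAt_sq_mul_exp_sq (x : ℝ) :
    HasDerivAt (fun x => x ^ 2 * exp (x ^ 2)) (2 * x * exp (x ^ 2) * (1 + x ^ 2)) x := by
  have hsq : HasDerivAt (fun x : ℝ => x ^ 2) (2 * x) x := by
    simpa using hasDerivAt_pow 2 x
  exact (hsq.mul hsq.exp).congr_deriv (by ring)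

lemma hasDerivAt_sq_mul_exp_sq_of_hasDerivAt {f : ℝ → ℝ}
    (hf : ∀ t, HasDerivAt f (-f t / (1 + f t ^ 2)) t) (t : ℝ) :
    HasDerivAt (fun t => f t ^ 2 * exp (f t ^ 2)) (-2 * (f t ^ 2 * exp (f t ^ 2))) t := by
  have hpos : 1 + f t ^ 2 ≠ 0 := by positivity
  refine ((hasDerivAt_sq_mul_exp_sq (f t)).comp t (hf t)).congr_deriv ?_
  field_simp

lemma sq_abs_mul_exp_half_sq_mul_exp_neg (e t : ℝ) :
    (|e| * exp (e ^ 2 / 2) * exp (-t)) ^ 2 = e ^ 2 * exp (e ^ 2) * exp (-2 * t) := by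
  rw [mul_pow, mul_pow, sq_abs, ← exp_nat_mul, ← exp_nat_mul]
  ring_nf

theorem scalar_example_estimates
    (E : ℝ → ℝ → ℝ)
    (hinit : ∀ e, E e 0 = e)
    (hflow : ∀ e t, HasDerivAt (E e) (-(E e t) / (1 + (E e t) ^ 2)) t) :
    ∀ e t : ℝ, 0 ≤ t →
      (E e t) ^ 2 * exp ((E e t) ^ 2) = e ^ 2 * exp (e ^ 2) * exp (-2 * t) ∧
      (E e t) ^ 2 ≤ e ^ 2 * exp (e ^ 2) * exp (-2 * t) ∧
      |E e t| ≤ |e| * exp (e ^ 2 / 2) * exp (-t) := by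
  intro e t _
  have hV : (E e t) ^ 2 * exp ((E e t) ^ 2) = e ^ 2 * exp (e ^ 2) * exp (-2 * t) := by
    simpa only [hinit] using eq_mul_exp_of_hasDerivAt_eq_const_mul
      (hasDerivAt_sq_mul_exp_sq_of_hasDerivAt (hflow e)) t
  have hsq : (E e t) ^ 2 ≤ e ^ 2 * exp (e ^ 2) * exp (-2 * t) :=
    (le_mul_of_one_le_right (sq_nonneg _) (one_le_exp (sq_nonneg _))).trans_eq hV
  refine ⟨hV, hsq, abs_le_of_sq_le_sq ?_ (by positivity)⟩
  rwa [sq_abs_mul_exp_half_sq_mul_exp_neg]
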